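/- The span over ℝ of the three vectors p_B, B₁·p_B, B₁⁻¹·p_B in ℂ³ is invariant under both B and B₁, and the three vectors are linearly independent over ℂ. -/

import Mathlib

open Matrix Complex

noncomputable def A : Matrix (Fin 3) (Fin 3) ℂ :=
  !![1, -(Real.sqrt 2 : ℂ), (Real.sqrt 3 : ℂ) * Complex.I - 1;
     0, 1, (Real.sqrt 2 : ℂ);
     0, 0, 1]

noncomputable def B : Matrix (Fin 3) (Fin 3) ℂ :=
  !![1, 0, 0;
     (Real.sqrt 2 : ℂ), 1, 0;
     -(Real.sqrt 3 : ℂ) * Complex.I - 1, -(Real.sqrt 2 : ℂ), 1]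

noncomputable def B₁ : Matrix (Fin 3) (Fin 3) ℂ := A * B ^ 2 * A⁻¹

def pB : Fin 3 → ℂ := ![0, 0, 1]

noncomputable def herm (z w : Fin 3 → ℂ) : ℂ :=
  (starRingEnd ℂ) (z 0) * w 2 + (starRingEnd ℂ) (z 1) * w 1 + (starRingEnd ℂ) (z 2) * w 0

noncomputable def realSpan : Submodule ℝ (Fin 3 → ℂ) :=
  Submodule.span ℝ {pB, B₁.mulVec pB, B₁⁻¹.mulVec pB}

/-!
`B` fixes `pB`, and on the vectors `v₁ = B₁ pB`, `v₂ = B₁⁻¹ pB` both `B` and `B₁` act by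
integer combinations of `pB, v₁, v₂`, so both preserve the real span of these three vectors.
They are a basis of `ℂ³` because the matrix with rows `pB, v₁, v₂` has determinant `-128 √2`.
-/

theorem Matrix.mulVec_mem_span_of_forall_mem {R S n : Type*} [CommSemiring R] [CommSemiring S]
    [Algebra R S] [Fintype n] (M : Matrix n n S) {s : Set (n → S)}
    (hs : ∀ x ∈ s, M *ᵥ x ∈ Submodule.span R s) :
    ∀ v ∈ Submodule.span R s, M *ᵥ v ∈ Submodule.span R s := fun _ hv ↦
  (Submodule.map_span_le ((mulVecLin M).restrictScalars R) s _).2 hs ⟨_, hv, rfl⟩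

theorem Complex.ofReal_sqrt_sq {x : ℝ} (hx : 0 ≤ x) : (Real.sqrt x : ℂ) ^ 2 = x := by
  rw [← ofReal_pow, Real.sq_sqrt hx]

@[grind =]
lemma ofReal_sqrt_two_sq : (Real.sqrt 2 : ℂ) ^ 2 = 2 := by
  simpa using ofReal_sqrt_sq (x := 2) zero_le_two

@[grind =]
lemma ofReal_sqrt_three_sq : (Real.sqrt 3 : ℂ) ^ 2 = 3 := by
  simpa using ofReal_sqrt_sq (x := 3) zero_le_three

attribute [grind =] I_sq

noncomputable def Ainv : Matrix (Fin 3) (Fin 3) ℂ :=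
  !![1, (Real.sqrt 2 : ℂ), -1 - (Real.sqrt 3 : ℂ) * I;
     0, 1, -(Real.sqrt 2 : ℂ);
     0, 0, 1]

noncomputable def v₁ : Fin 3 → ℂ :=
  ![-16, 4 * (Real.sqrt 2 : ℂ) * (Real.sqrt 3 : ℂ) * I, 3 + 6 * (Real.sqrt 3 : ℂ) * I]

noncomputable def v₂ : Fin 3 → ℂ :=
  ![-16, 8 * (Real.sqrt 2 : ℂ) + 4 * (Real.sqrt 2 : ℂ) * (Real.sqrt 3 : ℂ) * I,
    7 + 2 * (Real.sqrt 3 : ℂ) * I]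

lemma A_mul_Ainv : A * Ainv = 1 := by
  ext i j
  fin_cases i <;> fin_cases j <;> simp [A, Ainv, mul_apply, Fin.sum_univ_three]
  grind

lemma inv_A : A⁻¹ = Ainv := inv_eq_right_inv A_mul_Ainv

lemma det_A : A.det = 1 := by simp [A, det_fin_three]

lemma det_B : B.det = 1 := by simp [B, det_fin_three]

lemma det_B₁ : B₁.det = 1 := by
  simp [B₁, det_nonsing_inv, det_A, det_B]

lemma B₁_mulVec (v : Fin 3 → ℂ) : B₁ *ᵥ v = A *ᵥ (B *ᵥ (B *ᵥ (Ainv *ᵥ v))) := by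
  simp only [B₁, inv_A, pow_two, mulVec_mulVec, mul_assoc]

lemma B₁_mulVec_pB : B₁ *ᵥ pB = v₁ := by
  rw [B₁_mulVec]
  ext i
  fin_cases i <;> simp [A, Ainv, B, pB, v₁, mulVec, dotProduct, Fin.sum_univ_three] <;> grind

lemma B₁_mulVec_v₁ : B₁ *ᵥ v₁ = (-3 : ℝ) • pB + (3 : ℝ) • v₁ + (1 : ℝ) • v₂ := by
  rw [B₁_mulVec]
  ext i
  fin_cases i <;>
    simp [A, Ainv, B, pB, v₁, v₂, mulVec, dotProduct, Fin.sum_univ_three, real_smul] <;> grind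

lemma B₁_mulVec_v₂ : B₁ *ᵥ v₂ = pB := by
  rw [B₁_mulVec]
  ext i
  fin_cases i <;> simp [A, Ainv, B, pB, v₂, mulVec, dotProduct, Fin.sum_univ_three] <;> grind

lemma inv_B₁_mulVec_pB : B₁⁻¹ *ᵥ pB = v₂ := by
  rw [← B₁_mulVec_v₂, mulVec_mulVec, nonsing_inv_mul _ (by simp [det_B₁]), one_mulVec]

lemma B_mulVec_pB : B *ᵥ pB = pB := by
  ext i
  fin_cases i <;> simp [B, pB, mulVec, dotProduct, Fin.sum_univ_three]

lemma B_mulVec_v₁ : B *ᵥ v₁ = (24 : ℝ) • pB + (3 : ℝ) • v₁ + (-2 : ℝ) • v₂ := by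
  ext i
  fin_cases i <;> simp [B, pB, v₁, v₂, mulVec, dotProduct, Fin.sum_univ_three, real_smul] <;> grind

lemma B_mulVec_v₂ : B *ᵥ v₂ = (8 : ℝ) • pB + (2 : ℝ) • v₁ + (-1 : ℝ) • v₂ := by
  ext i
  fin_cases i <;> simp [B, pB, v₁, v₂, mulVec, dotProduct, Fin.sum_univ_three, real_smul] <;> grind

lemma realSpan_eq : realSpan = Submodule.span ℝ {pB, v₁, v₂} := by
  rw [realSpan, B₁_mulVec_pB, inv_B₁_mulVec_pB]

lemma det_of_pB_v₁_v₂ : (Matrix.of ![pB, v₁, v₂]).det = -128 * (Real.sqrt 2 : ℂ) := by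
  simp [det_fin_three, pB, v₁, v₂]
  grind

theorem stmt_15 :
    (∀ v ∈ realSpan, B.mulVec v ∈ realSpan) ∧
    (∀ v ∈ realSpan, B₁.mulVec v ∈ realSpan) ∧
    LinearIndependent ℂ ![pB, B₁.mulVec pB, B₁⁻¹.mulVec pB] := by
  have mem_span {a b c : ℝ} : a • pB + b • v₁ + c • v₂ ∈ Submodule.span ℝ {pB, v₁, v₂} :=
    Submodule.mem_span_triple.2 ⟨a, b, c, rfl⟩
  rw [realSpan_eq]
  refine ⟨B.mulVec_mem_span_of_forall_mem ?_, B₁.mulVec_mem_span_of_forall_mem ?_, ?_⟩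
  · rintro x (rfl | rfl | rfl)
    · rw [B_mulVec_pB]; exact Submodule.subset_span (by simp)
    · rw [B_mulVec_v₁]; exact mem_span
    · rw [B_mulVec_v₂]; exact mem_span
  · rintro x (rfl | rfl | rfl)
    · rw [B₁_mulVec_pB]; exact Submodule.subset_span (by simp)
    · rw [B₁_mulVec_v₁]; exact mem_span
    · rw [B₁_mulVec_v₂]; exact Submodule.subset_span (by simp)
  · rw [B₁_mulVec_pB, inv_B₁_mulVec_pB]
    refine (linearIndependent_rows_iff_isUnit (A := of ![pB, v₁, v₂])).2 ?_
    rw [isUnit_iff_isUnit_det, det_of_pB_v₁_v₂]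
    simp
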